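/- arXiv:1906.07334 — 3 statements merged into one kernel-verified Lean document; each statement's English description precedes it below -/
import Mathlib

section
/- If y(k) → y_r, u(k) → u_r, x(k+1) = A x(k) + B u(k), y(k) = C x(k), the pair (A, C) is detectable, and x_r, u_r, y_r satisfy x_r = A x_r + B u_r and y_r = C x_r, then x(k) → x_r. -/
/-!
With `M = A - L C` Schur stable, the error `e k = x k - x_r` obeys
`e (k + 1) = M e k + L (y k - y_r) + B (u k - u_r)`, a stable recursion driven by a vanishing
input. Gelfand's formula gives `‖M ^ k‖ ≤ c r ^ k` with `r < 1`, so by variation of constants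
`‖e k‖` is bounded by `c r ^ k ‖e 0‖` plus `c` times the convolution of `r ^ k` with the norm of
the input, and such a geometric convolution of a null sequence is again null.
-/

open Filter Topology Finset Matrix
open scoped NNReal

attribute [local instance] Matrix.linftyOpNormedAddCommGroup Matrix.linftyOpNormedRing
  Matrix.linftyOpNormedAlgebra

theorem tendsto_zero_of_le_mul_add {r : ℝ} (hr0 : 0 ≤ r) (hr1 : r < 1) {b v : ℕ → ℝ}
    (hb : ∀ k, 0 ≤ b k) (hv : Tendsto v atTop (𝓝 0))
    (hrec : ∀ k, b (k + 1) ≤ r * b k + v k) : Tendsto b atTop (𝓝 0) := by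
  refine tendsto_order.2 ⟨fun a ha => .of_forall fun k => ha.trans_le (hb k), fun ε hε => ?_⟩
  have hδ : 0 < (1 - r) * (ε / 2) := by nlinarith
  obtain ⟨K, hK⟩ := eventually_atTop.1 (hv.eventually (gt_mem_nhds hδ))
  -- once `v < (1 - r) ε / 2`, the excess of `b` over `ε / 2` contracts by the factor `r`
  have hdecay : ∀ j, b (K + j) - ε / 2 ≤ r ^ j * max (b K - ε / 2) 0 := by
    intro j
    induction j with
    | zero => simp
    | succ j ih =>
      have hstep : b (K + j + 1) - ε / 2 ≤ r * (b (K + j) - ε / 2) := by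
        nlinarith [hrec (K + j), hK (K + j) (by omega)]
      calc b (K + (j + 1)) - ε / 2 ≤ r * (r ^ j * max (b K - ε / 2) 0) :=
            hstep.trans (mul_le_mul_of_nonneg_left ih hr0)
        _ = r ^ (j + 1) * max (b K - ε / 2) 0 := by ring
  have hgeom : Tendsto (fun j => r ^ j * max (b K - ε / 2) 0) atTop (𝓝 0) := by
    simpa using (tendsto_pow_atTop_nhds_zero_of_lt_one hr0 hr1).mul_const _
  obtain ⟨J, hJ⟩ := eventually_atTop.1 (hgeom.eventually (gt_mem_nhds (half_pos hε)))
  filter_upwards [eventually_ge_atTop (K + J)] with k hk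
  obtain ⟨j, rfl⟩ := Nat.exists_eq_add_of_le (le_of_add_le_left hk)
  linarith [hdecay j, hJ j (by omega)]

theorem tendsto_sum_range_pow_mul_of_tendsto_zero {r : ℝ} (hr0 : 0 ≤ r) (hr1 : r < 1)
    {v : ℕ → ℝ} (hv : Tendsto v atTop (𝓝 0)) :
    Tendsto (fun k => ∑ j ∈ range k, r ^ (k - 1 - j) * v j) atTop (𝓝 0) := by
  set s := fun k => ∑ j ∈ range k, r ^ (k - 1 - j) * v j
  have hs : ∀ k, s (k + 1) = r * s k + v k := by
    intro k
    simp only [s, sum_range_succ, Nat.add_sub_cancel, Nat.sub_self, pow_zero, one_mul, mul_sum]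
    congr 1
    refine sum_congr rfl fun j hj => ?_
    rw [← mul_assoc, ← pow_succ', show k - 1 - j + 1 = k - j by have := mem_range.1 hj; omega]
  rw [tendsto_zero_iff_abs_tendsto_zero] at hv ⊢
  refine tendsto_zero_of_le_mul_add hr0 hr1 (fun k => abs_nonneg _) hv fun k => ?_
  calc |s (k + 1)| = |r * s k + v k| := by rw [hs]
    _ ≤ |r * s k| + |v k| := abs_add_le _ _
    _ = r * |s k| + |v k| := by rw [abs_mul, abs_of_nonneg hr0]

theorem Matrix.eq_pow_mulVec_add_sum {R ι : Type*} [Semiring R] [Fintype ι] [DecidableEq ι]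
    {M : Matrix ι ι R} {e w : ℕ → ι → R} (he : ∀ k, e (k + 1) = M *ᵥ e k + w k) (k : ℕ) :
    e k = (M ^ k) *ᵥ e 0 + ∑ j ∈ range k, (M ^ (k - 1 - j)) *ᵥ w j := by
  induction k with
  | zero => simp
  | succ k ih =>
    rw [he, ih, mulVec_add, mulVec_mulVec, ← pow_succ', mulVec_sum, sum_range_succ,
      Nat.add_sub_cancel, Nat.sub_self, pow_zero, one_mulVec, add_assoc]
    congr 2
    refine sum_congr rfl fun j hj => ?_
    rw [mulVec_mulVec, ← pow_succ', show k - 1 - j + 1 = k - j by have := mem_range.1 hj; omega]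

theorem Matrix.tendsto_zero_of_eq_mulVec_add {α ι : Type*} [NormedRing α] [Fintype ι]
    [DecidableEq ι] {M : Matrix ι ι α} {c r : ℝ} (hr0 : 0 ≤ r) (hr1 : r < 1)
    (hM : ∀ k, ‖M ^ k‖ ≤ c * r ^ k) {e w : ℕ → ι → α} (he : ∀ k, e (k + 1) = M *ᵥ e k + w k)
    (hw : Tendsto w atTop (𝓝 0)) : Tendsto e atTop (𝓝 0) := by
  have hle : ∀ k (v : ι → α), ‖(M ^ k) *ᵥ v‖ ≤ c * r ^ k * ‖v‖ := fun k v =>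
    (linfty_opNorm_mulVec _ v).trans (mul_le_mul_of_nonneg_right (hM k) (norm_nonneg v))
  have hbound : ∀ k,
      ‖e k‖ ≤ c * r ^ k * ‖e 0‖ + c * ∑ j ∈ range k, r ^ (k - 1 - j) * ‖w j‖ := by
    intro k
    rw [eq_pow_mulVec_add_sum he k, mul_sum]
    exact (norm_add_le _ _).trans (add_le_add (hle _ _) ((norm_sum_le _ _).trans
      (sum_le_sum fun j _ => (hle _ _).trans_eq (by ring))))
  refine squeeze_zero_norm hbound ?_
  simpa using (((tendsto_pow_atTop_nhds_zero_of_lt_one hr0 hr1).const_mul c).mul_const _).add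
    ((tendsto_sum_range_pow_mul_of_tendsto_zero hr0 hr1 (by simpa using hw.norm)).const_mul c)

theorem Matrix.linfty_opNorm_map_of_norm_map {α β ι κ : Type*} [NormedAddCommGroup α]
    [NormedAddCommGroup β] [Fintype ι] [Fintype κ] (P : Matrix ι κ α) {f : α → β}
    (hf : ∀ a, ‖f a‖ = ‖a‖) : ‖P.map f‖ = ‖P‖ := by
  have hf' : ∀ a, ‖f a‖₊ = ‖a‖₊ := fun a => NNReal.eq (hf a)
  simp only [linfty_opNorm_def, map_apply, hf']

theorem eventually_norm_pow_le_pow_of_spectralRadius_lt {A : Type*} [NormedRing A]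
    [NormedAlgebra ℂ A] [CompleteSpace A] {a : A} {r : ℝ≥0} (ha : spectralRadius ℂ a < r) :
    ∀ᶠ k in atTop, ‖a ^ k‖ ≤ r ^ k := by
  filter_upwards [(spectrum.pow_norm_pow_one_div_tendsto_nhds_spectralRadius a).eventually
    (gt_mem_nhds ha), eventually_gt_atTop 0] with k hk hk0
  rw [ENNReal.ofReal_lt_coe_iff (by positivity), one_div] at hk
  simpa using ((Real.rpow_inv_lt_iff_of_pos (norm_nonneg (a ^ k)) r.2 (Nat.cast_pos.2 hk0)).1 hk).le

theorem exists_norm_pow_le_mul_pow_of_forall_norm_lt_one {A : Type*} [NormedRing A]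
    [NormedAlgebra ℂ A] [CompleteSpace A] {a : A} (ha : ∀ μ ∈ spectrum ℂ a, ‖μ‖ < 1) :
    ∃ c r : ℝ, 0 ≤ r ∧ r < 1 ∧ ∀ k, ‖a ^ k‖ ≤ c * r ^ k := by
  cases subsingleton_or_nontrivial A with
  | inl _ => exact ⟨0, 0, le_rfl, one_pos, fun k => by simp [Subsingleton.elim (a ^ k) 0]⟩
  | inr _ =>
    have hρ : spectralRadius ℂ a < (1 : ℝ≥0) :=
      spectrum.spectralRadius_lt_of_forall_lt a fun μ hμ => by exact_mod_cast ha μ hμ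
    obtain ⟨r, hρr, hr1⟩ := ENNReal.lt_iff_exists_nnreal_btwn.1 hρ
    have hr0 : 0 < r := ENNReal.coe_pos.1 (pos_of_gt hρr)
    obtain ⟨c, hc⟩ := (Asymptotics.isBigO_nat_atTop_iff (g := fun k => (r : ℝ) ^ k)
      fun k hk => absurd hk (by positivity)).1 (Asymptotics.IsBigO.of_bound' (by
        simpa using eventually_norm_pow_le_pow_of_spectralRadius_lt hρr))
    exact ⟨c, r, r.2, by exact_mod_cast hr1, fun k => by simpa using hc k⟩

/-- If y(k) → y_r, u(k) → u_r along the linear dynamics and (A, C) is detectable,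
then x(k) → x_r where (x_r, u_r, y_r) is a steady state. -/
theorem state_convergence_from_output {n m p : ℕ}
    (A : Matrix (Fin n) (Fin n) ℝ) (B : Matrix (Fin n) (Fin m) ℝ) (C : Matrix (Fin p) (Fin n) ℝ)
    (hdet : ∃ L : Matrix (Fin n) (Fin p) ℝ,
      ∀ μ ∈ spectrum ℂ ((A - L * C).map (algebraMap ℝ ℂ)), ‖μ‖ < 1)
    (x : ℕ → Fin n → ℝ) (u : ℕ → Fin m → ℝ) (y : ℕ → Fin p → ℝ)
    (xr : Fin n → ℝ) (ur : Fin m → ℝ) (yr : Fin p → ℝ)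
    (hdyn : ∀ k, x (k + 1) = A.mulVec (x k) + B.mulVec (u k))
    (hout : ∀ k, y k = C.mulVec (x k))
    (hss : xr = A.mulVec xr + B.mulVec ur) (hssy : yr = C.mulVec xr)
    (hy : Filter.Tendsto y Filter.atTop (nhds yr))
    (hu : Filter.Tendsto u Filter.atTop (nhds ur)) :
    Filter.Tendsto x Filter.atTop (nhds xr) := by
  obtain ⟨L, hL⟩ := hdet
  obtain ⟨c, r, hr0, hr1, hpow⟩ := exists_norm_pow_le_mul_pow_of_forall_norm_lt_one hL
  have hpowR : ∀ k, ‖(A - L * C) ^ k‖ ≤ c * r ^ k := fun k => by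
    rw [← linfty_opNorm_map_of_norm_map _ fun a : ℝ => norm_algebraMap' ℂ a, Matrix.map_pow]
    exact hpow k
  have herr : ∀ k, x (k + 1) - xr =
      (A - L * C) *ᵥ (x k - xr) + (L *ᵥ (y k - yr) + B *ᵥ (u k - ur)) := by
    intro k
    rw [hdyn, hout, hssy]
    conv_lhs => rw [hss]
    simp only [sub_mulVec, mulVec_sub, ← mulVec_mulVec]
    abel
  have hw : Tendsto (fun k => L *ᵥ (y k - yr) + B *ᵥ (u k - ur)) atTop (𝓝 0) := by
    have hF : Continuous fun q : (Fin p → ℝ) × (Fin m → ℝ) =>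
        L *ᵥ (q.1 - yr) + B *ᵥ (q.2 - ur) := by
      fun_prop
    simpa [Function.comp_def] using (hF.tendsto (yr, ur)).comp (hy.prodMk_nhds hu)
  simpa using (tendsto_zero_of_eq_mulVec_add (e := fun k => x k - xr) hr0 hr1 hpowR herr
    hw).add_const xr
end

section
/- PBH characterization for the incremental (velocity-form) system: with Ā = [[I, C̃ Ã],[0, Ã]] and B̄ = [[C̃ B̃],[B̃]], where Ã is Schur stable, the pair (Ā, B̄) is stabilizable if and only if both rank conditions hold: (i) rank([C̃ Ã, C̃ B̃; Ã - I, B̃]^T) = n + p, and (ii) rank([2I, 0; C̃ Ã, Ã + I; C̃ B̃, B̃]^T) = n + p. -/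
/-!
The PBH matrix `[λI - Ā, B̄]` is block upper triangular in its first `p + n` columns, with
diagonal blocks `(λ - 1) I` and `λI - Ã`. For `|λ| ≥ 1` the second block is invertible since `Ã`
is Schur stable, so only `λ = 1` can lose rank. There `[I - Ā, B̄]` has, up to sign and zero
columns, the same columns as `[C̃Ã, C̃B̃; Ã - I, B̃]`, which gives condition (i). Condition (ii)
holds automatically: its top block is block lower triangular with diagonal blocks `2I` and
`Ãᵀ + I`, and `-1` is not an eigenvalue of `Ã`.
-/

open Matrix

namespace Matrix

variable {K : Type*} [Field K] {m n o : Type*} [Fintype n] [Fintype o]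

theorem rank_mul_eq_left_of_mul_eq_one [DecidableEq n] (A : Matrix m n K) {B : Matrix n o K}
    {C : Matrix o n K} (hBC : B * C = 1) : (A * B).rank = A.rank :=
  le_antisymm (rank_mul_le_left A B) <| by
    simpa only [Matrix.mul_assoc, hBC, Matrix.mul_one] using rank_mul_le_left (A * B) C

theorem rank_fromCols_of_isUnit_det [Fintype m] [DecidableEq m] (A : Matrix m m K)
    (B : Matrix m n K) (hA : IsUnit A.det) : (fromCols A B).rank = Fintype.card m := by
  refine le_antisymm (rank_le_card_height _) ?_
  calc Fintype.card m = A.rank := (rank_of_isUnit A ((isUnit_iff_isUnit_det A).mpr hA)).symm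
    _ = (fromCols A B * fromRows (1 : Matrix m m K) (0 : Matrix n m K)).rank := by
      rw [fromCols_mul_fromRows, Matrix.mul_one, Matrix.mul_zero, add_zero]
    _ ≤ (fromCols A B).rank := rank_mul_le_left _ _

theorem rank_fromRows_of_isUnit_det [Fintype m] [DecidableEq n] (A : Matrix n n K)
    (B : Matrix m n K) (hA : IsUnit A.det) : (fromRows A B).rank = Fintype.card n := by
  rw [← rank_transpose, transpose_fromRows,
    rank_fromCols_of_isUnit_det _ _ (by rwa [det_transpose])]

theorem rank_eq_card_height_iff [Fintype m] (A : Matrix m n K) :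
    A.rank = Fintype.card m ↔ LinearIndependent K A.row := by
  rw [rank_eq_finrank_span_row, linearIndependent_iff_card_eq_finrank_span, Set.finrank, eq_comm]

theorem rank_map_algebraMap_eq_card_height_iff [Fintype m] {L : Type*} [Field L] [Algebra K L]
    (A : Matrix m n K) :
    (A.map (algebraMap K L)).rank = Fintype.card m ↔ A.rank = Fintype.card m := by
  rw [rank_eq_card_height_iff, rank_eq_card_height_iff]
  exact linearIndependent_algebraMap_comp_iff

end Matrix

theorem isUnit_smul_one_sub_of_norm_spectrum_lt_one {𝕜 A : Type*} [NormedField 𝕜] [Ring A]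
    [Algebra 𝕜 A] {a : A} (ha : ∀ μ ∈ spectrum 𝕜 a, ‖μ‖ < 1) {l : 𝕜} (hl : 1 ≤ ‖l‖) :
    IsUnit (l • 1 - a) := by
  have : l ∉ spectrum 𝕜 a := fun hmem => (ha l hmem).not_ge hl
  rwa [spectrum.notMem_iff, Algebra.algebraMap_eq_smul_one] at this

section Incremental

variable {n m p : ℕ} (At : Matrix (Fin n) (Fin n) ℝ) (Bt : Matrix (Fin n) (Fin m) ℝ)
  (Ct : Matrix (Fin p) (Fin n) ℝ)

theorem det_add_one_ne_zero_of_norm_spectrum_lt_one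
    (hSchur : ∀ μ ∈ spectrum ℂ (At.map (algebraMap ℝ ℂ)), ‖μ‖ < 1) : (At + 1).det ≠ 0 := by
  have hunit := isUnit_smul_one_sub_of_norm_spectrum_lt_one hSchur (l := -1) (by simp)
  have hmap : (-1 : ℂ) • 1 - At.map (algebraMap ℝ ℂ) = -(algebraMap ℝ ℂ).mapMatrix (At + 1) := by
    simp [neg_smul, map_add, sub_eq_add_neg, add_comm]
  rw [hmap, IsUnit.neg_iff, isUnit_iff_isUnit_det, ← RingHom.map_det, isUnit_iff_ne_zero] at hunit
  exact fun h => hunit (by rw [h, map_zero])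

theorem rank_incremental_condition_ii_eq
    (hSchur : ∀ μ ∈ spectrum ℂ (At.map (algebraMap ℝ ℂ)), ‖μ‖ < 1) :
    (Matrix.fromRows
      (Matrix.fromBlocks ((2 : ℝ) • (1 : Matrix (Fin p) (Fin p) ℝ)) 0 (Ct * At)ᵀ (Atᵀ + 1))
      (Matrix.fromCols (Ct * Bt)ᵀ Btᵀ)).rank = n + p := by
  have hdet : IsUnit (Matrix.fromBlocks ((2 : ℝ) • (1 : Matrix (Fin p) (Fin p) ℝ)) 0
      (Ct * At)ᵀ (Atᵀ + 1)).det := by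
    rw [det_fromBlocks_zero₁₂, det_smul, det_one, ← transpose_one, ← transpose_add, det_transpose,
      isUnit_iff_ne_zero]
    exact mul_ne_zero (by simp) (det_add_one_ne_zero_of_norm_spectrum_lt_one At hSchur)
  rw [rank_fromRows_of_isUnit_det _ _ hdet]
  simp [add_comm]

theorem rank_pbh_incremental_of_ne_one
    (hSchur : ∀ μ ∈ spectrum ℂ (At.map (algebraMap ℝ ℂ)), ‖μ‖ < 1) {l : ℂ} (hl : 1 ≤ ‖l‖)
    (hl1 : l ≠ 1) :
    (Matrix.fromCols
      (l • (1 : Matrix (Fin p ⊕ Fin n) (Fin p ⊕ Fin n) ℂ) -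
        (Matrix.fromBlocks 1 (Ct * At) 0 At).map (algebraMap ℝ ℂ))
      ((Matrix.fromRows (Ct * Bt) Bt).map (algebraMap ℝ ℂ))).rank = n + p := by
  have hblock : l • (1 : Matrix (Fin p ⊕ Fin n) (Fin p ⊕ Fin n) ℂ) -
      (Matrix.fromBlocks 1 (Ct * At) 0 At).map (algebraMap ℝ ℂ) =
      Matrix.fromBlocks ((l - 1) • 1) (-(Ct * At).map (algebraMap ℝ ℂ)) 0
        (l • 1 - At.map (algebraMap ℝ ℂ)) := by
    rw [fromBlocks_map, ← fromBlocks_one, fromBlocks_smul, sub_eq_add_neg, fromBlocks_neg,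
      fromBlocks_add]
    simp [add_smul, sub_eq_add_neg]
  have hdet : IsUnit (l • (1 : Matrix (Fin p ⊕ Fin n) (Fin p ⊕ Fin n) ℂ) -
      (Matrix.fromBlocks 1 (Ct * At) 0 At).map (algebraMap ℝ ℂ)).det := by
    rw [hblock, det_fromBlocks_zero₂₁, det_smul, det_one, mul_one]
    exact (isUnit_iff_ne_zero.mpr (pow_ne_zero _ (sub_ne_zero.mpr hl1))).mul
      ((isUnit_iff_isUnit_det _).mp (isUnit_smul_one_sub_of_norm_spectrum_lt_one hSchur hl))
  rw [rank_fromCols_of_isUnit_det _ _ hdet]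
  simp [add_comm]

theorem rank_pbh_incremental_one_iff :
    (Matrix.fromCols
      ((1 : ℂ) • (1 : Matrix (Fin p ⊕ Fin n) (Fin p ⊕ Fin n) ℂ) -
        (Matrix.fromBlocks 1 (Ct * At) 0 At).map (algebraMap ℝ ℂ))
      ((Matrix.fromRows (Ct * Bt) Bt).map (algebraMap ℝ ℂ))).rank = n + p ↔
    (Matrix.fromBlocks (Ct * At) (Ct * Bt) (At - 1) Bt)ᵀ.rank = n + p := by
  -- `E` deletes the first `p` columns and negates the next `n`; `F` is a right inverse.
  set E : Matrix (Fin n ⊕ Fin m) ((Fin p ⊕ Fin n) ⊕ Fin m) ℝ :=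
    fromBlocks (fromCols 0 (-1)) 0 0 1
  set F : Matrix ((Fin p ⊕ Fin n) ⊕ Fin m) (Fin n ⊕ Fin m) ℝ :=
    fromBlocks (fromRows 0 (-1)) 0 0 1
  have hE : E * F = 1 := by
    simp [E, F, fromBlocks_multiply, fromCols_mul_fromRows, ← fromBlocks_one]
  have hprod : Matrix.fromBlocks (Ct * At) (Ct * Bt) (At - 1) Bt * E =
      fromCols (1 - Matrix.fromBlocks 1 (Ct * At) 0 At) (fromRows (Ct * Bt) Bt) := by
    ext (i | i) ((j | j) | j) <;> simp [E, fromBlocks_multiply, one_apply]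
  have hcols : Matrix.fromCols
      ((1 : ℂ) • (1 : Matrix (Fin p ⊕ Fin n) (Fin p ⊕ Fin n) ℂ) -
        (Matrix.fromBlocks 1 (Ct * At) 0 At).map (algebraMap ℝ ℂ))
      ((Matrix.fromRows (Ct * Bt) Bt).map (algebraMap ℝ ℂ)) =
      (Matrix.fromBlocks (Ct * At) (Ct * Bt) (At - 1) Bt * E).map (algebraMap ℝ ℂ) := by
    rw [hprod, fromCols_map, one_smul, Matrix.map_sub _ (map_sub _),
      Matrix.map_one _ (map_zero _) (map_one _)]
  have hcard : Fintype.card (Fin p ⊕ Fin n) = n + p := by simp [add_comm]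
  rw [rank_transpose, hcols, ← hcard, rank_map_algebraMap_eq_card_height_iff,
    rank_mul_eq_left_of_mul_eq_one _ hE]

end Incremental

/-- PBH characterization for the incremental (velocity-form) system:
(Ā, B̄) with Ā = [[I, C̃Ã],[0, Ã]], B̄ = [[C̃B̃],[B̃]] (Ã Schur stable) is stabilizable
iff the two rank conditions hold. -/
theorem incremental_pbh_characterization {n m p : ℕ}
    (At : Matrix (Fin n) (Fin n) ℝ) (Bt : Matrix (Fin n) (Fin m) ℝ)
    (Ct : Matrix (Fin p) (Fin n) ℝ)
    (hSchur : ∀ μ ∈ spectrum ℂ (At.map (algebraMap ℝ ℂ)), ‖μ‖ < 1) :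
    (∀ l : ℂ, 1 ≤ ‖l‖ →
        (Matrix.fromCols
          (l • (1 : Matrix (Fin p ⊕ Fin n) (Fin p ⊕ Fin n) ℂ) -
            (Matrix.fromBlocks 1 (Ct * At) 0 At).map (algebraMap ℝ ℂ))
          ((Matrix.fromRows (Ct * Bt) Bt).map (algebraMap ℝ ℂ))).rank = n + p) ↔
      ((Matrix.fromBlocks (Ct * At) (Ct * Bt) (At - 1) Bt)ᵀ.rank = n + p ∧
        (Matrix.fromRows
          (Matrix.fromBlocks ((2 : ℝ) • (1 : Matrix (Fin p) (Fin p) ℝ)) 0 (Ct * At)ᵀ (Atᵀ + 1))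
          (Matrix.fromCols (Ct * Bt)ᵀ Btᵀ)).rank = n + p) := by
  refine ⟨fun hpbh => ⟨?_, rank_incremental_condition_ii_eq At Bt Ct hSchur⟩, ?_⟩
  · exact (rank_pbh_incremental_one_iff At Bt Ct).mp (hpbh 1 (by simp))
  · rintro ⟨hcond, -⟩ l hl
    obtain rfl | hl1 := eq_or_ne l 1
    · exact (rank_pbh_incremental_one_iff At Bt Ct).mpr hcond
    · exact rank_pbh_incremental_of_ne_one At Bt Ct hSchur hl hl1
end

section
/- Convergence of incremental form implies convergence of absolute variables: if Δu(k) = u(k) - u(k-1) → 0 and y(k) → y_r where y(k) = C x(k) and x(k+1) = A x(k) + B u(k), with (A, C) detectable, Φ = [[I - A, -B],[C, 0]] invertible, and x(k), u(k) bounded, then u(k) converges to the unique u_r and x(k) converges to the unique x_r satisfying x_r = A x_r + B u_r, C x_r = y_r. -/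
/-!
Detectability provides a gain `L` for which `A - L C` has spectral radius `< 1`, so by Gelfand's
formula its powers tend to `0`. The increments `Δx(k) = x(k+1) - x(k)` satisfy
`Δx(k+1) = (A - L C) Δx(k) + L Δy(k) + B Δu(k)`: a stable recursion driven by a vanishing input,
and they are bounded, hence `Δx → 0`. Then `Φ (x(k), u(k)) = (-Δx(k), y(k)) → (0, y_r)`, and
applying `Φ⁻¹` shows that `(x(k), u(k))` converges to the unique steady state `Φ⁻¹ (0, y_r)`.
-/

open Filter Matrix
open scoped ENNReal NNReal Topology

theorem spectrum.spectralRadius_lt_of_forall_nnnorm_lt {𝕜 A : Type*} [NormedField 𝕜]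
    [ProperSpace 𝕜] [NormedRing A] [NormedAlgebra 𝕜 A] [CompleteSpace A] {a : A} {r : ℝ≥0}
    (hr : 0 < r) (h : ∀ k ∈ spectrum 𝕜 a, ‖k‖₊ < r) : spectralRadius 𝕜 a < r := by
  rcases (spectrum 𝕜 a).eq_empty_or_nonempty with he | hne
  · simpa [spectralRadius, he] using hr
  · exact spectrum.spectralRadius_lt_of_forall_lt_of_nonempty hne h

theorem tendsto_pow_atTop_nhds_zero_of_spectralRadius_lt_one {A : Type*} [NormedRing A]
    [NormedAlgebra ℂ A] [CompleteSpace A] {a : A} (ha : spectralRadius ℂ a < 1) :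
    Tendsto (a ^ ·) atTop (𝓝 0) := by
  obtain ⟨t, hρt, ht1⟩ := ENNReal.lt_iff_exists_nnreal_btwn.1 ha
  have hbound : ∀ᶠ k : ℕ in atTop, ‖a ^ k‖ ≤ (t : ℝ) ^ k := by
    filter_upwards
      [(spectrum.pow_nnnorm_pow_one_div_tendsto_nhds_spectralRadius a).eventually_lt_const hρt,
      eventually_ge_atTop 1] with k hk hk1
    rw [one_div, ENNReal.rpow_inv_lt_iff (by positivity), ENNReal.rpow_natCast] at hk
    exact_mod_cast hk.le
  exact squeeze_zero_norm' hbound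
    (tendsto_pow_atTop_nhds_zero_of_lt_one t.2 (by exact_mod_cast ht1))

theorem tendsto_sum_elim_nhds_sum_elim_iff {α ι κ X : Type*} [TopologicalSpace X]
    {l : Filter α} {f : α → ι → X} {g : α → κ → X} {a : ι → X} {b : κ → X} :
    Tendsto (fun k => Sum.elim (f k) (g k)) l (𝓝 (Sum.elim a b)) ↔
      Tendsto f l (𝓝 a) ∧ Tendsto g l (𝓝 b) := by
  simp only [tendsto_pi_nhds, Sum.forall, Sum.elim_inl, Sum.elim_inr]

namespace Matrix

section SquareMatrix

variable {ι : Type*} [Fintype ι] [DecidableEq ι]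

theorem tendsto_shift_sub_pow_mulVec {R : Type*} [Ring R] [TopologicalSpace R]
    [IsTopologicalRing R] {M : Matrix ι ι R} {z w : ℕ → ι → R}
    (hrec : ∀ k, z (k + 1) = M *ᵥ z k + w k) (hw : Tendsto w atTop (𝓝 0)) (N : ℕ) :
    Tendsto (fun k => z (k + N) - (M ^ N) *ᵥ z k) atTop (𝓝 0) := by
  induction N with
  | zero => simpa using tendsto_const_nhds
  | succ N ih =>
    have hstep : ∀ k, z (k + (N + 1)) - (M ^ (N + 1)) *ᵥ z k
        = M *ᵥ (z (k + N) - (M ^ N) *ᵥ z k) + w (k + N) := fun k => by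
      rw [← add_assoc, hrec, pow_succ', ← mulVec_mulVec, mulVec_sub]
      abel
    simp_rw [hstep]
    have hM := (continuous_const (y := M)).matrix_mulVec continuous_id |>.tendsto 0
    simpa using (hM.comp ih).add (hw.comp (tendsto_add_atTop_nat N))

theorem tendsto_nonsing_inv_mulVec {α R : Type*} [CommRing R] [TopologicalSpace R]
    [IsTopologicalRing R] {Φ : Matrix ι ι R} (hΦ : IsUnit Φ) {l : Filter α} {s : α → ι → R}
    {b : ι → R} (h : Tendsto (fun k => Φ *ᵥ s k) l (𝓝 b)) : Tendsto s l (𝓝 (Φ⁻¹ *ᵥ b)) := by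
  have hs : s = fun k => Φ⁻¹ *ᵥ (Φ *ᵥ s k) := by
    simp [mulVec_mulVec, nonsing_inv_mul _ ((isUnit_iff_isUnit_det _).1 hΦ)]
  rw [hs]
  exact ((continuous_const.matrix_mulVec continuous_id).tendsto b).comp h

section LinftyOpNorm

-- Only a tool for the proofs: the statements involve just the product topology on matrices.
attribute [local instance] Matrix.linftyOpNormedAddCommGroup Matrix.linftyOpNormedRing
  Matrix.linftyOpNormedAlgebra

theorem tendsto_pow_atTop_nhds_zero_of_spectrum_lt_one {M : Matrix ι ι ℝ}
    (hM : ∀ μ ∈ spectrum ℂ (M.map (algebraMap ℝ ℂ)), ‖μ‖ < 1) :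
    Tendsto (M ^ ·) atTop (𝓝 0) := by
  have hρ : spectralRadius ℂ (M.map (algebraMap ℝ ℂ)) < 1 := by
    exact_mod_cast spectrum.spectralRadius_lt_of_forall_nnnorm_lt one_pos fun μ hμ =>
      (by exact_mod_cast hM μ hμ : ‖μ‖₊ < 1)
  have hre : Continuous fun P : Matrix ι ι ℂ => P.map Complex.re :=
    continuous_id.matrix_map Complex.continuous_re
  convert (hre.tendsto 0).comp (tendsto_pow_atTop_nhds_zero_of_spectralRadius_lt_one hρ)
    using 2 with k
  · rw [Function.comp_apply, ← RingHom.mapMatrix_apply, ← map_pow]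
    ext i j
    simp
  · simp

theorem tendsto_zero_of_forall_eq_mulVec_add {R : Type*} [NormedRing R] {M : Matrix ι ι R}
    (hM : Tendsto (M ^ ·) atTop (𝓝 0)) {z w : ℕ → ι → R} {Z : ℝ} (hz : ∀ k, ‖z k‖ ≤ Z)
    (hrec : ∀ k, z (k + 1) = M *ᵥ z k + w k) (hw : Tendsto w atTop (𝓝 0)) :
    Tendsto z atTop (𝓝 0) := by
  rw [NormedAddGroup.tendsto_nhds_zero]
  intro ε hε
  obtain ⟨N, hN⟩ : ∃ N, ‖M ^ N‖ * Z < ε / 2 := by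
    have := (tendsto_norm_zero.comp hM).mul_const Z
    rw [zero_mul] at this
    exact (this.eventually_lt_const (half_pos hε)).exists
  have hrest := NormedAddGroup.tendsto_nhds_zero.1
    (tendsto_shift_sub_pow_mulVec hrec hw N) (ε / 2) (half_pos hε)
  rw [← map_add_atTop_eq_nat N, eventually_map]
  filter_upwards [hrest] with k hk
  calc ‖z (k + N)‖ = ‖M ^ N *ᵥ z k + (z (k + N) - M ^ N *ᵥ z k)‖ := by rw [add_sub_cancel]
    _ ≤ ‖M ^ N‖ * Z + ‖z (k + N) - M ^ N *ᵥ z k‖ := by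
      grw [norm_add_le, linfty_opNorm_mulVec, hz k]
    _ < ε := by linarith

end LinftyOpNorm

end SquareMatrix

section Blocks

variable {ι κ R : Type*} [Fintype ι] [Fintype κ] [DecidableEq ι] [Ring R]
  (A : Matrix ι ι R) (B : Matrix ι κ R) (C : Matrix κ ι R) (p : ι → R) (q : κ → R)

theorem fromBlocks_one_sub_mulVec_sum_elim :
    fromBlocks (1 - A) (-B) C 0 *ᵥ Sum.elim p q = Sum.elim (p - (A *ᵥ p + B *ᵥ q)) (C *ᵥ p) := by
  rw [fromBlocks_mulVec, sub_mulVec, one_mulVec, neg_mulVec, zero_mulVec, add_zero]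
  congr 1
  abel

theorem fromBlocks_one_sub_mulVec_sum_elim_eq_iff (r : κ → R) :
    fromBlocks (1 - A) (-B) C 0 *ᵥ Sum.elim p q = Sum.elim (0 : ι → R) r ↔
      p = A *ᵥ p + B *ᵥ q ∧ C *ᵥ p = r := by
  rw [fromBlocks_one_sub_mulVec_sum_elim, ← sub_eq_zero (a := p)]
  simp only [funext_iff, Sum.forall, Sum.elim_inl, Sum.elim_inr, Pi.zero_apply]

end Blocks

end Matrix

theorem increment_succ_eq_observer_mulVec_add {ι κ R : Type*} [Fintype ι] [Fintype κ]
    [Ring R] {A : Matrix ι ι R} {B : Matrix ι κ R} {C : Matrix κ ι R} (L : Matrix ι κ R)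
    {x : ℕ → ι → R} {u y : ℕ → κ → R} (hdyn : ∀ k, x (k + 1) = A *ᵥ x k + B *ᵥ u k)
    (hout : ∀ k, y k = C *ᵥ x k) (k : ℕ) :
    x (k + 1 + 1) - x (k + 1) = (A - L * C) *ᵥ (x (k + 1) - x k) +
      (L *ᵥ (y (k + 1) - y k) + B *ᵥ (u (k + 1) - u k)) := by
  rw [hout, hout, hdyn (k + 1), hdyn k]
  simp only [mulVec_sub, sub_mulVec, mulVec_add, ← mulVec_mulVec]
  abel

theorem incremental_convergence_general {n m : ℕ}
    (A : Matrix (Fin n) (Fin n) ℝ) (B : Matrix (Fin n) (Fin m) ℝ) (C : Matrix (Fin m) (Fin n) ℝ)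
    (hdet : ∃ L : Matrix (Fin n) (Fin m) ℝ,
      ∀ μ ∈ spectrum ℂ ((A - L * C).map (algebraMap ℝ ℂ)), ‖μ‖ < 1)
    (hΦ : IsUnit (Matrix.fromBlocks (1 - A) (-B) C 0))
    (x : ℕ → Fin n → ℝ) (u : ℕ → Fin m → ℝ) (y : ℕ → Fin m → ℝ) (yr : Fin m → ℝ)
    (hdyn : ∀ k, x (k + 1) = A.mulVec (x k) + B.mulVec (u k))
    (hout : ∀ k, y k = C.mulVec (x k))
    (hΔu : Filter.Tendsto (fun k => u (k + 1) - u k) Filter.atTop (nhds 0))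
    (hy : Filter.Tendsto y Filter.atTop (nhds yr))
    (hxbdd : ∃ M : ℝ, ∀ k, ‖x k‖ ≤ M) :
    ∃ (xr : Fin n → ℝ) (ur : Fin m → ℝ),
      (xr = A.mulVec xr + B.mulVec ur ∧ C.mulVec xr = yr) ∧
      Filter.Tendsto u Filter.atTop (nhds ur) ∧
      Filter.Tendsto x Filter.atTop (nhds xr) ∧
      ∀ (xr' : Fin n → ℝ) (ur' : Fin m → ℝ),
        (xr' = A.mulVec xr' + B.mulVec ur' ∧ C.mulVec xr' = yr) → xr' = xr ∧ ur' = ur := by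
  obtain ⟨L, hL⟩ := hdet
  obtain ⟨X, hX⟩ := hxbdd
  have hmulVec {p q : ℕ} (P : Matrix (Fin p) (Fin q) ℝ) :=
    (continuous_const (y := P)).matrix_mulVec continuous_id |>.tendsto 0
  have hΔy : Tendsto (fun k => y (k + 1) - y k) atTop (𝓝 0) := by
    simpa using (hy.comp (tendsto_add_atTop_nat 1)).sub hy
  have hΔx : Tendsto (fun k => x (k + 1) - x k) atTop (𝓝 0) :=
    tendsto_zero_of_forall_eq_mulVec_add (tendsto_pow_atTop_nhds_zero_of_spectrum_lt_one hL)
      (fun k => (norm_sub_le _ _).trans (add_le_add (hX _) (hX _)))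
      (increment_succ_eq_observer_mulVec_add L hdyn hout)
      (by simpa using ((hmulVec L).comp hΔy).add ((hmulVec B).comp hΔu))
  have hs := tendsto_nonsing_inv_mulVec hΦ (s := fun k => Sum.elim (x k) (u k))
    (b := Sum.elim 0 yr) <| by
      simp_rw [fromBlocks_one_sub_mulVec_sum_elim, ← hdyn, ← hout]
      exact tendsto_sum_elim_nhds_sum_elim_iff.2 ⟨by simpa using hΔx.neg, hy⟩
  set v := (fromBlocks (1 - A) (-B) C 0)⁻¹ *ᵥ Sum.elim 0 yr
  rw [← Sum.elim_comp_inl_inr v] at hs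
  obtain ⟨hx, hu⟩ := tendsto_sum_elim_nhds_sum_elim_iff.1 hs
  have hsteady (p q) : (p = A *ᵥ p + B *ᵥ q ∧ C *ᵥ p = yr) ↔
      fromBlocks (1 - A) (-B) C 0 *ᵥ Sum.elim p q = fromBlocks (1 - A) (-B) C 0 *ᵥ v := by
    rw [mulVec_mulVec, mul_nonsing_inv _ ((isUnit_iff_isUnit_det _).1 hΦ), one_mulVec,
      fromBlocks_one_sub_mulVec_sum_elim_eq_iff]
  refine ⟨v ∘ Sum.inl, v ∘ Sum.inr, (hsteady _ _).2 (by rw [Sum.elim_comp_inl_inr]), hu, hx, ?_⟩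
  intro xr' ur' h
  have hv := mulVec_injective_of_isUnit hΦ ((hsteady _ _).1 h)
  exact ⟨congrArg (· ∘ Sum.inl) hv, congrArg (· ∘ Sum.inr) hv⟩

/-- Convergence of the incremental form implies convergence of the absolute variables:
if Δu(k) → 0 and y(k) → y_r, with (A,C) detectable, Φ invertible, and bounded trajectories,
then u(k) → u_r and x(k) → x_r for the unique steady state (x_r, u_r). -/
theorem incremental_convergence {n m : ℕ}
    (A : Matrix (Fin n) (Fin n) ℝ) (B : Matrix (Fin n) (Fin m) ℝ) (C : Matrix (Fin m) (Fin n) ℝ)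
    (hdet : ∃ L : Matrix (Fin n) (Fin m) ℝ,
      ∀ μ ∈ spectrum ℂ ((A - L * C).map (algebraMap ℝ ℂ)), ‖μ‖ < 1)
    (hΦ : IsUnit (Matrix.fromBlocks (1 - A) (-B) C 0))
    (x : ℕ → Fin n → ℝ) (u : ℕ → Fin m → ℝ) (y : ℕ → Fin m → ℝ) (yr : Fin m → ℝ)
    (hdyn : ∀ k, x (k + 1) = A.mulVec (x k) + B.mulVec (u k))
    (hout : ∀ k, y k = C.mulVec (x k))
    (hΔu : Filter.Tendsto (fun k => u (k + 1) - u k) Filter.atTop (nhds 0))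
    (hy : Filter.Tendsto y Filter.atTop (nhds yr))
    (hxbdd : ∃ M : ℝ, ∀ k, ‖x k‖ ≤ M) (hubdd : ∃ M : ℝ, ∀ k, ‖u k‖ ≤ M) :
    ∃ (xr : Fin n → ℝ) (ur : Fin m → ℝ),
      (xr = A.mulVec xr + B.mulVec ur ∧ C.mulVec xr = yr) ∧
      Filter.Tendsto u Filter.atTop (nhds ur) ∧
      Filter.Tendsto x Filter.atTop (nhds xr) ∧
      ∀ (xr' : Fin n → ℝ) (ur' : Fin m → ℝ),
        (xr' = A.mulVec xr' + B.mulVec ur' ∧ C.mulVec xr' = yr) → xr' = xr ∧ ur' = ur :=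
  incremental_convergence_general A B C hdet hΦ x u y yr hdyn hout hΔu hy hxbdd
end
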